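/- Consider the generalized fair learning problem: minimize E_{(x,s)∼P_{X,S}}[ TV(Q_{Ŷ|X=x,S=s}, P_{Y|X=x,S=s}) ] over conditional distributions Q_{Ŷ|X,S} subject to DDP(Ŷ, S) ≤ ε, where Ŷ is distributed according to Q_{Ŷ|X,S} · P_{X,S}. Suppose there exists φ : 𝒳 × 𝒴 → ℝ such that P(X=x | Y=y, S=s) / P(X=x | S=s) = φ(x, y) for all x ∈ 𝒳, y ∈ 𝒴, s ∈ 𝒮, and s_max ∈ 𝒮 satisfies P_S(s_max) = 1/2 + δ for some δ > 0. Then for any optimal solution Q*, the induced Ŷ satisfies for every s ∈ 𝒮: TV(P_{Ŷ|S=s}, P_{Y|S=s_max}) ≤ (1/2 + 1/(4δ)) · ε. -/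

import Mathlib

open Finset

noncomputable section

variable {𝒳 𝒴 𝒮 : Type*} [Fintype 𝒳] [Fintype 𝒴] [Fintype 𝒮]

/-- Total variation distance between two finitely supported distributions on `𝒴`,
`TV(p, q) = (1/2) ∑ y, |p y - q y|`. -/
def TV (p q : 𝒴 → ℝ) : ℝ := (1 / 2) * ∑ y, |p y - q y|

/-- Marginal distribution of `(X, S)` under the joint `P` of `(X, Y, S)`. -/
def margXS (P : 𝒳 → 𝒴 → 𝒮 → ℝ) (x : 𝒳) (s : 𝒮) : ℝ := ∑ y, P x y s

/-- Marginal distribution of `(Y, S)`. -/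
def margYS (P : 𝒳 → 𝒴 → 𝒮 → ℝ) (y : 𝒴) (s : 𝒮) : ℝ := ∑ x, P x y s

/-- Marginal distribution of `S`. -/
def margS (P : 𝒳 → 𝒴 → 𝒮 → ℝ) (s : 𝒮) : ℝ := ∑ x, margXS P x s

/-- Marginal distribution of `X`. -/
def margX (P : 𝒳 → 𝒴 → 𝒮 → ℝ) (x : 𝒳) : ℝ := ∑ s, margXS P x s

/-- Conditional distribution of `Y` given `X = x, S = s`. -/
def condYXS (P : 𝒳 → 𝒴 → 𝒮 → ℝ) (x : 𝒳) (s : 𝒮) (y : 𝒴) : ℝ := P x y s / margXS P x s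

/-- Conditional distribution of `Y` given `S = s`. -/
def condYS (P : 𝒳 → 𝒴 → 𝒮 → ℝ) (s : 𝒮) (y : 𝒴) : ℝ := margYS P y s / margS P s

/-- The ratio `P(X=x | Y=y, S=s) / P(X=x | S=s)`. -/
def condRatio (P : 𝒳 → 𝒴 → 𝒮 → ℝ) (x : 𝒳) (y : 𝒴) (s : 𝒮) : ℝ :=
  (P x y s / margYS P y s) / (margXS P x s / margS P s)

/-- A conditional distribution `Q`: for every `(x, s)`, `Q x s` is a probability
distribution on labels. -/
def IsRule (Q : 𝒳 → 𝒮 → 𝒴 → ℝ) : Prop :=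
  (∀ x s y, 0 ≤ Q x s y) ∧ ∀ x s, ∑ y, Q x s y = 1

/-- The generalized objective: `E_{(x,s)∼P_{X,S}}[TV(Q_{Ŷ|X=x,S=s}, P_{Y|X=x,S=s})]`. -/
def objective (P : 𝒳 → 𝒴 → 𝒮 → ℝ) (Q : 𝒳 → 𝒮 → 𝒴 → ℝ) : ℝ :=
  ∑ x, ∑ s, margXS P x s * TV (Q x s) (condYXS P x s)

/-- Joint distribution of `(Ŷ, S)` induced by `Q · P_{X,S}`. -/
def jointYhatS (P : 𝒳 → 𝒴 → 𝒮 → ℝ) (Q : 𝒳 → 𝒮 → 𝒴 → ℝ) (yh : 𝒴) (s : 𝒮) : ℝ :=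
  ∑ x, margXS P x s * Q x s yh

/-- Marginal distribution of the prediction `Ŷ`. -/
def margYhat (P : 𝒳 → 𝒴 → 𝒮 → ℝ) (Q : 𝒳 → 𝒮 → 𝒴 → ℝ) (yh : 𝒴) : ℝ :=
  ∑ s, jointYhatS P Q yh s

/-- Conditional distribution of the prediction `Ŷ` given `S = s`. -/
def condYhatS (P : 𝒳 → 𝒴 → 𝒮 → ℝ) (Q : 𝒳 → 𝒮 → 𝒴 → ℝ) (s : 𝒮) (yh : 𝒴) : ℝ :=
  jointYhatS P Q yh s / margS P s

/-- Difference of demographic parity of the prediction `Ŷ` induced by rule `Q`. -/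
def DDP (P : 𝒳 → 𝒴 → 𝒮 → ℝ) (Q : 𝒳 → 𝒮 → 𝒴 → ℝ) : ℝ :=
  ∑ yh, ∑ s, |condYhatS P Q s yh - margYhat P Q yh|

end

/-!
Since `P(y | x, s) = φ(x, y) P(y | s)`, the rule `Q'(· | x, s) = P(· | x, s_max)`, which
ignores `s`, gives `P_{Ŷ|S=s} = P_{Y|S=s_max}` for every `s`: it has DDP zero and costs
`∑ₛ P(s) TV(P_{Y|S=s_max}, P_{Y|S=s})`. By convexity of TV the objective of `Q` is at least
`∑ₛ P(s) TV(P_{Ŷ|S=s}, P_{Y|S=s})`. Comparing the two through triangle inequalities via `P_Ŷ`,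
the excess weight `2δ` of `s_max` gives `TV(P_{Ŷ|S=s_max}, P_{Y|S=s_max}) ≤ ε / (8δ)`, while
`DDP ≤ ε` gives `TV(P_{Ŷ|S=s}, P_Ŷ) + TV(P_{Ŷ|S=s_max}, P_Ŷ) ≤ ε / 2`.
-/

section TotalVariation

variable {𝒴 : Type*} [Fintype 𝒴]

lemma TV_nonneg (p q : 𝒴 → ℝ) : 0 ≤ TV p q := by
  unfold TV; positivity

lemma TV_comm (p q : 𝒴 → ℝ) : TV p q = TV q p := by
  simp only [TV, abs_sub_comm]

lemma TV_self (p : 𝒴 → ℝ) : TV p p = 0 := by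
  simp [TV]

lemma TV_triangle (p q r : 𝒴 → ℝ) : TV p r ≤ TV p q + TV q r := by
  unfold TV
  rw [← mul_add, ← sum_add_distrib]
  gcongr with y _
  exact abs_sub_le _ _ _

lemma TV_smul {c : ℝ} (hc : 0 ≤ c) (p q : 𝒴 → ℝ) : TV (c • p) (c • q) = c * TV p q := by
  simp only [TV, Pi.smul_apply, smul_eq_mul, ← mul_sub, abs_mul, abs_of_nonneg hc, ← mul_sum]
  ring

lemma TV_sum_smul_le {ι : Type*} (s : Finset ι) {w : ι → ℝ} (hw : ∀ i ∈ s, 0 ≤ w i)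
    (f g : ι → 𝒴 → ℝ) :
    TV (∑ i ∈ s, w i • f i) (∑ i ∈ s, w i • g i) ≤ ∑ i ∈ s, w i * TV (f i) (g i) := by
  calc TV (∑ i ∈ s, w i • f i) (∑ i ∈ s, w i • g i)
      = 1 / 2 * ∑ y, |∑ i ∈ s, w i * (f i y - g i y)| := by
        simp only [TV, Finset.sum_apply, Pi.smul_apply, smul_eq_mul, ← sum_sub_distrib, ← mul_sub]
    _ ≤ 1 / 2 * ∑ y, ∑ i ∈ s, w i * |f i y - g i y| := by
        gcongr with y
        refine (abs_sum_le_sum_abs _ _).trans_eq (sum_congr rfl fun i hi => ?_)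
        rw [abs_mul, abs_of_nonneg (hw i hi)]
    _ = ∑ i ∈ s, w i * TV (f i) (g i) := by
        simp only [TV, mul_sum]
        rw [sum_comm]
        exact sum_congr rfl fun i _ => sum_congr rfl fun y _ => by ring

end TotalVariation

section Weighted

variable {𝒴 ι : Type*} [Fintype 𝒴] [Fintype ι] {p : ι → ℝ} {i₀ : ι} {f g : ι → 𝒴 → ℝ}
  {m : 𝒴 → ℝ}

lemma two_mul_sub_one_mul_TV_le (hp0 : ∀ i, 0 ≤ p i) (hp1 : ∑ i, p i = 1) (hi₀ : 1 / 2 ≤ p i₀)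
    (hle : ∑ i, p i * TV (f i) (g i) ≤ ∑ i, p i * TV (g i₀) (g i)) :
    (2 * p i₀ - 1) * TV (f i₀) (g i₀) ≤ 1 / 2 * ∑ i, TV (f i) m := by
  classical
  set a := TV (f i₀) (g i₀)
  set t := TV (f i₀) m
  set E := univ.erase i₀
  have hsplit (F : ι → ℝ) : ∑ i, F i = F i₀ + ∑ i ∈ E, F i :=
    (add_sum_erase _ F (mem_univ i₀)).symm
  have hpE : ∑ i ∈ E, p i = 1 - p i₀ := by linarith [hsplit p]
  have hpoint : ∀ i ∈ E, p i * TV (g i₀) (g i) ≤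
      p i * TV (f i) (g i) + 1 / 2 * TV (f i) m + p i * (t + a) := by
    intro i hi
    have hpi : p i ≤ 1 / 2 := by
      linarith [single_le_sum (fun j _ => hp0 j) hi]
    have htri : TV (g i₀) (g i) ≤ a + t + TV (f i) m + TV (f i) (g i) := by
      have h₁ := TV_triangle (g i₀) (f i₀) (g i)
      have h₂ := TV_triangle (f i₀) m (g i)
      have h₃ := TV_triangle m (f i) (g i)
      rw [TV_comm (g i₀) (f i₀)] at h₁
      rw [TV_comm m (f i)] at h₃
      linarith
    nlinarith [hp0 i, TV_nonneg (f i) m]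
  have hsum := sum_le_sum hpoint
  rw [sum_add_distrib, sum_add_distrib, ← mul_sum, ← sum_mul, hpE] at hsum
  rw [hsplit, hsplit fun i => p i * TV (g i₀) (g i), TV_self, mul_zero, zero_add] at hle
  rw [hsplit]
  nlinarith [TV_nonneg (f i₀) m]

lemma TV_le_of_weighted_TV_le (hp0 : ∀ i, 0 ≤ p i) (hp1 : ∑ i, p i = 1) {δ : ℝ} (hδ : 0 < δ)
    (hi₀ : p i₀ = 1 / 2 + δ) (hle : ∑ i, p i * TV (f i) (g i) ≤ ∑ i, p i * TV (g i₀) (g i))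
    {ε : ℝ} (hm : ∑ i, TV (f i) m ≤ ε / 2) (i : ι) :
    TV (f i) (g i₀) ≤ (1 / 2 + 1 / (4 * δ)) * ε := by
  have hε : 0 ≤ ε := by linarith [sum_nonneg fun i (_ : i ∈ univ) => TV_nonneg (f i) m]
  have ha : TV (f i₀) (g i₀) ≤ ε / (8 * δ) := by
    have := two_mul_sub_one_mul_TV_le (m := m) hp0 hp1 (by linarith) hle
    rw [le_div_iff₀ (by positivity)]
    nlinarith
  have hbound : (1 / 2 + 1 / (4 * δ)) * ε = ε / 2 + 2 * (ε / (8 * δ)) := by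
    field_simp
    ring
  have hb : 0 ≤ ε / (8 * δ) := by positivity
  rw [hbound]
  by_cases hi : i = i₀
  · subst hi
    linarith
  · have hpair : TV (f i) m + TV (f i₀) m ≤ ∑ i, TV (f i) m :=
      add_le_sum (fun j _ => TV_nonneg (f j) m) (mem_univ i) (mem_univ i₀) hi
    have h₁ := TV_triangle (f i) m (g i₀)
    have h₂ := TV_triangle m (f i₀) (g i₀)
    rw [TV_comm m (f i₀)] at h₂
    linarith

end Weighted

section Distributions

variable {𝒳 𝒴 𝒮 : Type*} {P : 𝒳 → 𝒴 → 𝒮 → ℝ}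

lemma sum_margS_eq_one [Fintype 𝒳] [Fintype 𝒴] [Fintype 𝒮] (hP1 : ∑ x, ∑ y, ∑ s, P x y s = 1) :
    ∑ s, margS P s = 1 := by
  rw [← hP1]
  simp only [margS, margXS]
  rw [sum_comm]
  exact sum_congr rfl fun x _ => sum_comm

lemma margS_pos [Fintype 𝒳] [Fintype 𝒴] [Nonempty 𝒳] {s : 𝒮} (hXS : ∀ x, 0 < margXS P x s) :
    0 < margS P s :=
  sum_pos (fun x _ => hXS x) univ_nonempty

lemma margXS_mul_condYXS [Fintype 𝒴] {x : 𝒳} {s : 𝒮} (h : margXS P x s ≠ 0) (y : 𝒴) :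
    margXS P x s * condYXS P x s y = P x y s :=
  mul_div_cancel₀ _ h

lemma margS_mul_condYS [Fintype 𝒳] [Fintype 𝒴] {s : 𝒮} (h : margS P s ≠ 0) (y : 𝒴) :
    margS P s * condYS P s y = margYS P y s :=
  mul_div_cancel₀ _ h

lemma condRatio_eq_condYXS_div_condYS [Fintype 𝒳] [Fintype 𝒴] (x : 𝒳) (y : 𝒴) (s : 𝒮) :
    condRatio P x y s = condYXS P x s y / condYS P s y := by
  simp only [condRatio, condYXS, condYS]
  ring

lemma DDP_eq_two_mul_sum_TV [Fintype 𝒳] [Fintype 𝒴] [Fintype 𝒮] (Q : 𝒳 → 𝒮 → 𝒴 → ℝ) :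
    DDP P Q = 2 * ∑ s, TV (condYhatS P Q s) (margYhat P Q) := by
  simp only [DDP, TV, mul_sum]
  rw [sum_comm]
  exact sum_congr rfl fun s _ => sum_congr rfl fun y _ => by ring

lemma DDP_nonneg [Fintype 𝒳] [Fintype 𝒴] [Fintype 𝒮] (Q : 𝒳 → 𝒮 → 𝒴 → ℝ) : 0 ≤ DDP P Q :=
  sum_nonneg fun _ _ => sum_nonneg fun _ _ => abs_nonneg _

lemma margS_mul_TV_condYhatS_le [Fintype 𝒳] [Fintype 𝒴] {s : 𝒮} (hXS : ∀ x, 0 < margXS P x s)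
    (hS : 0 < margS P s) (Q : 𝒳 → 𝒮 → 𝒴 → ℝ) :
    margS P s * TV (condYhatS P Q s) (condYS P s) ≤
      ∑ x, margXS P x s * TV (Q x s) (condYXS P x s) := by
  have hYhat : margS P s • condYhatS P Q s = ∑ x, margXS P x s • Q x s := by
    ext y
    simp [condYhatS, jointYhatS, mul_div_cancel₀ _ hS.ne']
  have hY : margS P s • condYS P s = ∑ x, margXS P x s • condYXS P x s := by
    ext y
    simp [margS_mul_condYS hS.ne', margXS_mul_condYXS (hXS _).ne', margYS]
  rw [← TV_smul hS.le, hYhat, hY]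
  exact TV_sum_smul_le _ (fun x _ => (hXS x).le) _ _

lemma sum_margS_mul_TV_condYhatS_le_objective [Fintype 𝒳] [Fintype 𝒴] [Fintype 𝒮]
    (hXS : ∀ x s, 0 < margXS P x s) (hS : ∀ s, 0 < margS P s) (Q : 𝒳 → 𝒮 → 𝒴 → ℝ) :
    ∑ s, margS P s * TV (condYhatS P Q s) (condYS P s) ≤ objective P Q := by
  rw [objective, sum_comm]
  exact sum_le_sum fun s _ => margS_mul_TV_condYhatS_le (hXS · s) (hS s) Q

noncomputable def posteriorAt [Fintype 𝒴] (P : 𝒳 → 𝒴 → 𝒮 → ℝ) (s₀ : 𝒮) : 𝒳 → 𝒮 → 𝒴 → ℝ :=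
  fun x _ => condYXS P x s₀

lemma isRule_posteriorAt [Fintype 𝒴] (hP0 : ∀ x y s, 0 ≤ P x y s) {s₀ : 𝒮}
    (hXS : ∀ x, 0 < margXS P x s₀) : IsRule (posteriorAt P s₀) := by
  refine ⟨fun x _ y => div_nonneg (hP0 x y s₀) (hXS x).le, fun x _ => ?_⟩
  simp only [posteriorAt, condYXS, ← sum_div]
  exact div_self (hXS x).ne'

variable [Fintype 𝒳] [Fintype 𝒴] {φ : 𝒳 → 𝒴 → ℝ}

lemma sum_margXS_mul_eq_margS (hfac : ∀ x s y, condYXS P x s y = φ x y * condYS P s y)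
    (hXS : ∀ x s, 0 < margXS P x s) (hY : ∀ s y, 0 < condYS P s y) (s : 𝒮) (y : 𝒴) :
    ∑ x, margXS P x s * φ x y = margS P s := by
  have hS : margS P s ≠ 0 := by
    intro h
    simpa [condYS, h] using hY s y
  apply mul_right_cancel₀ (hY s y).ne'
  calc (∑ x, margXS P x s * φ x y) * condYS P s y
      = ∑ x, margXS P x s * condYXS P x s y := by
        rw [sum_mul]
        exact sum_congr rfl fun x _ => by rw [hfac]; ring
    _ = margYS P y s := by simp only [margXS_mul_condYXS (hXS _ s).ne']; rfl
    _ = margS P s * condYS P s y := (margS_mul_condYS hS y).symm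

lemma condYhatS_posteriorAt (hfac : ∀ x s y, condYXS P x s y = φ x y * condYS P s y)
    (hXS : ∀ x s, 0 < margXS P x s) (hY : ∀ s y, 0 < condYS P s y) (hS : ∀ s, 0 < margS P s)
    (s₀ s : 𝒮) : condYhatS P (posteriorAt P s₀) s = condYS P s₀ := by
  ext y
  simp only [condYhatS, jointYhatS, posteriorAt, hfac _ s₀ y, ← mul_assoc, ← sum_mul,
    sum_margXS_mul_eq_margS hfac hXS hY, mul_div_right_comm, div_self (hS s).ne', one_mul]

lemma margYhat_posteriorAt [Fintype 𝒮] (hfac : ∀ x s y, condYXS P x s y = φ x y * condYS P s y)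
    (hXS : ∀ x s, 0 < margXS P x s) (hY : ∀ s y, 0 < condYS P s y) (hS : ∀ s, 0 < margS P s)
    (hsum : ∑ s, margS P s = 1) (s₀ : 𝒮) : margYhat P (posteriorAt P s₀) = condYS P s₀ := by
  ext y
  have hjoint (s : 𝒮) : jointYhatS P (posteriorAt P s₀) y s = margS P s * condYS P s₀ y := by
    rw [← condYhatS_posteriorAt hfac hXS hY hS s₀ s, condYhatS, mul_div_cancel₀ _ (hS s).ne']
  simp only [margYhat, hjoint, ← sum_mul, hsum, one_mul]

lemma DDP_posteriorAt [Fintype 𝒮] (hfac : ∀ x s y, condYXS P x s y = φ x y * condYS P s y)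
    (hXS : ∀ x s, 0 < margXS P x s) (hY : ∀ s y, 0 < condYS P s y) (hS : ∀ s, 0 < margS P s)
    (hsum : ∑ s, margS P s = 1) (s₀ : 𝒮) : DDP P (posteriorAt P s₀) = 0 := by
  simp [DDP, condYhatS_posteriorAt hfac hXS hY hS, margYhat_posteriorAt hfac hXS hY hS hsum]

lemma objective_posteriorAt [Fintype 𝒮] (hfac : ∀ x s y, condYXS P x s y = φ x y * condYS P s y)
    (hφ : ∀ x y, 0 ≤ φ x y) (hXS : ∀ x s, 0 < margXS P x s) (hY : ∀ s y, 0 < condYS P s y)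
    (s₀ : 𝒮) :
    objective P (posteriorAt P s₀) = ∑ s, margS P s * TV (condYS P s₀) (condYS P s) := by
  rw [objective, sum_comm]
  refine sum_congr rfl fun s _ => ?_
  calc ∑ x, margXS P x s * TV (condYXS P x s₀) (condYXS P x s)
      = 1 / 2 * ∑ y, (∑ x, margXS P x s * φ x y) * |condYS P s₀ y - condYS P s y| := by
        simp only [TV, hfac _ s₀, hfac _ s, ← mul_sub, abs_mul, abs_of_nonneg (hφ _ _), mul_sum,
          sum_mul]
        rw [sum_comm]
        exact sum_congr rfl fun y _ => sum_congr rfl fun x _ => by ring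
    _ = margS P s * TV (condYS P s₀) (condYS P s) := by
        simp only [sum_margXS_mul_eq_margS hfac hXS hY, TV, mul_sum]
        exact sum_congr rfl fun y _ => by ring

end Distributions

variable {𝒳 𝒴 𝒮 : Type*} [Fintype 𝒳] [Fintype 𝒴] [Fintype 𝒮]

theorem generalized_ddp_fair_optimal_inductive_bias_general
    (P : 𝒳 → 𝒴 → 𝒮 → ℝ)
    (hP0 : ∀ x y s, 0 ≤ P x y s)
    (hP1 : ∑ x, ∑ y, ∑ s, P x y s = 1)
    (hXS : ∀ x s, 0 < margXS P x s)
    (hYS : ∀ y s, 0 < margYS P y s)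
    (φ : 𝒳 → 𝒴 → ℝ)
    (hφ : ∀ x y s, condRatio P x y s = φ x y)
    (smax : 𝒮) (δ : ℝ) (hδ : 0 < δ) (hsmax : margS P smax = 1 / 2 + δ)
    (ε : ℝ)
    (Q : 𝒳 → 𝒮 → 𝒴 → ℝ)
    (hfair : DDP P Q ≤ ε)
    (hopt : ∀ Q' : 𝒳 → 𝒮 → 𝒴 → ℝ, IsRule Q' → DDP P Q' ≤ ε →
      objective P Q ≤ objective P Q') :
    ∀ s, TV (condYhatS P Q s) (condYS P smax) ≤ (1 / 2 + 1 / (4 * δ)) * ε := by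
  have : Nonempty 𝒳 := by
    by_contra h
    simp [not_nonempty_iff.mp h] at hP1
  have hS (s : 𝒮) : 0 < margS P s := margS_pos (hXS · s)
  have hY (s : 𝒮) (y : 𝒴) : 0 < condYS P s y := div_pos (hYS y s) (hS s)
  have hfac (x s y) : condYXS P x s y = φ x y * condYS P s y := by
    rw [← hφ x y s, condRatio_eq_condYXS_div_condYS, div_mul_cancel₀ _ (hY s y).ne']
  have hφ0 (x y) : 0 ≤ φ x y := by
    rw [eq_div_of_mul_eq (hY smax y).ne' (hfac x smax y).symm]
    exact div_nonneg (div_nonneg (hP0 x y smax) (hXS x smax).le) (hY smax y).le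
  have hsum := sum_margS_eq_one hP1
  have hcompare := hopt _ (isRule_posteriorAt hP0 (hXS · smax))
    ((DDP_posteriorAt hfac hXS hY hS hsum smax).trans_le ((DDP_nonneg Q).trans hfair))
  rw [objective_posteriorAt hfac hφ0 hXS hY] at hcompare
  rw [DDP_eq_two_mul_sum_TV] at hfair
  exact TV_le_of_weighted_TV_le (m := margYhat P Q) (fun s => (hS s).le) hsum hδ hsmax
    ((sum_margS_mul_TV_condYhatS_le_objective hXS hS Q).trans hcompare) (by linarith)

/-- **Theorem 3 (DDP case).** In the generalized fair learning problem, if the ratio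
`P(x|y,s)/P(x|s)` does not depend on `s` and `P_S(s_max) = 1/2 + δ` with `δ > 0`, then
any optimal solution among rules with `DDP(Ŷ, S) ≤ ε` satisfies, for every `s`,
`TV(P_{Ŷ|S=s}, P_{Y|S=s_max}) ≤ (1/2 + 1/(4δ)) ε`. -/
theorem generalized_ddp_fair_optimal_inductive_bias
    (P : 𝒳 → 𝒴 → 𝒮 → ℝ)
    (hP0 : ∀ x y s, 0 ≤ P x y s)
    (hP1 : ∑ x, ∑ y, ∑ s, P x y s = 1)
    (hXS : ∀ x s, 0 < margXS P x s)
    (hYS : ∀ y s, 0 < margYS P y s)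
    (φ : 𝒳 → 𝒴 → ℝ)
    (hφ : ∀ x y s, condRatio P x y s = φ x y)
    (smax : 𝒮) (δ : ℝ) (hδ : 0 < δ) (hsmax : margS P smax = 1 / 2 + δ)
    (ε : ℝ)
    (Q : 𝒳 → 𝒮 → 𝒴 → ℝ) (hQ : IsRule Q)
    (hfair : DDP P Q ≤ ε)
    (hopt : ∀ Q' : 𝒳 → 𝒮 → 𝒴 → ℝ, IsRule Q' → DDP P Q' ≤ ε →
      objective P Q ≤ objective P Q') :
    ∀ s, TV (condYhatS P Q s) (condYS P smax) ≤ (1 / 2 + 1 / (4 * δ)) * ε :=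
  generalized_ddp_fair_optimal_inductive_bias_general P hP0 hP1 hXS hYS φ hφ smax δ hδ hsmax ε Q
    hfair hopt
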